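/- (Generalized Stolz–Cesàro step.) Let λ < 1/2 and β > 0, let (p_{i,n}) be a Zipf array, and set φ_{i,n} := φ(p_{i,n}, n). Let (u_{i,n}) be real numbers (n ≥ 2, 1 ≤ i ≤ n) for which there exists M with |u_{i,n}| ≤ M·φ_{i,n} for all i, n, and let ℓ be a real number such that for every ε > 0 there exists δ > 0 with: n·p_{i,n} ≤ δ implies |u_{i,n}/φ_{i,n} − ℓ| ≤ ε. Then lim_{n→∞} (Σ_{i=1}^{n} u_{i,n})/(Σ_{i=1}^{n} φ_{i,n}) = ℓ. -/

import Mathlib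

open MeasureTheory Real Filter Topology

/-- The weight `φ(p,n) = p^{2λ} (1 + (βnp)⁻¹)^{-1+2λ}`. -/
noncomputable def phiW (lam β : ℝ) (p : ℝ) (n : ℕ) : ℝ :=
  p ^ (2 * lam) * (1 + (β * n * p)⁻¹) ^ (-1 + 2 * lam)

/-- `p` is a Zipf array with constants `κ₁ ≤ κ₂`. -/
def IsZipfArray (p : ℕ → ℕ → ℝ) (κ₁ κ₂ : ℝ) : Prop :=
  0 < κ₁ ∧ κ₁ ≤ κ₂ ∧ ∀ n : ℕ, 2 ≤ n → ∀ i : ℕ, 1 ≤ i → i ≤ n →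
    0 < p i n ∧ p i n ≤ 1 ∧
    κ₁ / ((i : ℝ) * Real.log n) ≤ p i n ∧ p i n ≤ κ₂ / ((i : ℝ) * Real.log n)

/-
Split the indices at `n p_{i,n} ≤ δ`. On the small indices `u/φ` is `ε`-close to `ℓ`, so it
suffices that the large ones carry a vanishing fraction of `∑ φ`. By the Zipf bounds these lie
below `K n / log n` with `K = max (κ₂ / δ) 1`, where `φ ≤ p^{2λ} ≍ (i log n)^{-2λ}`; their
total is `O(n^{1-2λ} / log n)`. On the small indices `φ ≍ n^{1-2λ} p ≍ n^{1-2λ} / (i log n)`,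
and the harmonic sum over `K n / log n < i ≤ n` is at least `log (log n / K) - 1`, so `∑ φ` is
larger by a factor `≳ log log n`.
-/

open Finset

theorem abs_sum_div_sum_sub_le {ι : Type*} {s : Finset ι} (P : ι → Prop) [DecidablePred P]
    {u φ : ι → ℝ} {ℓ ε η M : ℝ} (hs : s.Nonempty) (hφ : ∀ i ∈ s, 0 < φ i)
    (hM : ∀ i ∈ s, |u i| ≤ M * φ i) (hε : 0 ≤ ε)
    (hgood : ∀ i ∈ s, ¬ P i → |u i / φ i - ℓ| ≤ ε)
    (hbad : ∑ i ∈ s with P i, φ i ≤ η * ∑ i ∈ s, φ i) :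
    |(∑ i ∈ s, u i) / (∑ i ∈ s, φ i) - ℓ| ≤ ε + (M + |ℓ|) * η := by
  have hS : 0 < ∑ i ∈ s, φ i := sum_pos hφ hs
  have hM0 : 0 ≤ M := by
    obtain ⟨j, hj⟩ := hs
    exact nonneg_of_mul_nonneg_left ((abs_nonneg _).trans (hM j hj)) (hφ j hj)
  have hbad_i : ∀ i ∈ s, |u i - ℓ * φ i| ≤ (M + |ℓ|) * φ i := fun i hi => by
    calc |u i - ℓ * φ i| ≤ |u i| + |ℓ * φ i| := abs_sub _ _
      _ = |u i| + |ℓ| * φ i := by rw [abs_mul, abs_of_pos (hφ i hi)]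
      _ ≤ (M + |ℓ|) * φ i := by linarith [hM i hi]
  have hgood_i : ∀ i ∈ s, ¬ P i → |u i - ℓ * φ i| ≤ ε * φ i := fun i hi hPi => by
    rw [show u i - ℓ * φ i = (u i / φ i - ℓ) * φ i by field_simp [(hφ i hi).ne'],
      abs_mul, abs_of_pos (hφ i hi)]
    exact mul_le_mul_of_nonneg_right (hgood i hi hPi) (hφ i hi).le
  have hsum : |∑ i ∈ s, u i - ℓ * ∑ i ∈ s, φ i| ≤ (ε + (M + |ℓ|) * η) * ∑ i ∈ s, φ i := by
    calc |∑ i ∈ s, u i - ℓ * ∑ i ∈ s, φ i| = |∑ i ∈ s, (u i - ℓ * φ i)| := by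
          rw [sum_sub_distrib, mul_sum]
      _ ≤ ∑ i ∈ s, |u i - ℓ * φ i| := abs_sum_le_sum_abs _ _
      _ = ∑ i ∈ s with P i, |u i - ℓ * φ i| + ∑ i ∈ s with ¬ P i, |u i - ℓ * φ i| :=
          (sum_filter_add_sum_filter_not s P _).symm
      _ ≤ (M + |ℓ|) * ∑ i ∈ s with P i, φ i + ε * ∑ i ∈ s with ¬ P i, φ i := by
          rw [mul_sum, mul_sum]
          gcongr with i hi i hi
          · exact hbad_i i (mem_filter.1 hi).1
          · exact hgood_i i (mem_filter.1 hi).1 (mem_filter.1 hi).2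
      _ ≤ (M + |ℓ|) * (η * ∑ i ∈ s, φ i) + ε * ∑ i ∈ s, φ i := by
          gcongr
          · exact fun i hi _ => (hφ i hi).le
          · exact filter_subset _ s
      _ = (ε + (M + |ℓ|) * η) * ∑ i ∈ s, φ i := by ring
  rw [div_sub' hS.ne', abs_div, abs_of_pos hS, div_le_iff₀ hS, mul_comm _ ℓ]
  exact hsum

theorem rpow_le_max_rpow_of_mem_Icc {x y z : ℝ} (hx : 0 < x) (hxy : x ≤ y) (hyz : y ≤ z)
    (r : ℝ) : y ^ r ≤ max (x ^ r) (z ^ r) := by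
  rcases le_total 0 r with hr | hr
  · exact (rpow_le_rpow (hx.le.trans hxy) hyz hr).trans (le_max_right _ _)
  · exact (rpow_le_rpow_of_nonpos hx hxy hr).trans (le_max_left _ _)

theorem one_sub_mul_rpow_neg_le_rpow_sub_rpow {a : ℝ} (ha0 : 0 ≤ a) (ha1 : a < 1) {x : ℝ}
    (hx : 0 ≤ x) : (1 - a) * (x + 1) ^ (-a) ≤ (x + 1) ^ (1 - a) - x ^ (1 - a) := by
  have hx1 : 0 < x + 1 := by linarith
  -- Bernoulli's inequality `(1 + s) ^ (1 - a) ≤ 1 + (1 - a) s` at `s = -1 / (x + 1)`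
  have hbern := rpow_one_add_le_one_add_mul_self (s := -(x + 1)⁻¹)
    (by rw [neg_le_neg_iff]; exact inv_le_one_of_one_le₀ (by linarith)) (p := 1 - a)
    (by linarith) (by linarith)
  have hbase : 1 + -(x + 1)⁻¹ = x * (x + 1)⁻¹ := by field_simp; ring
  rw [hbase, mul_rpow hx (inv_nonneg.2 hx1.le), inv_rpow hx1.le, ← div_eq_mul_inv,
    div_le_iff₀ (rpow_pos_of_pos hx1 _)] at hbern
  have hpow : (x + 1) ^ (1 - a) = (x + 1) ^ (-a) * (x + 1) := by
    rw [sub_eq_neg_add, rpow_add_one hx1.ne']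
  have hexpand : (1 + (1 - a) * -(x + 1)⁻¹) * ((x + 1) ^ (-a) * (x + 1)) =
      (x + 1) ^ (-a) * (x + 1) - (1 - a) * (x + 1) ^ (-a) := by
    field_simp
    ring
  rw [hpow] at hbern ⊢
  linarith

theorem sum_Icc_rpow_neg_le {a : ℝ} (ha : a < 1) (m : ℕ) :
    ∑ i ∈ Icc 1 m, (i : ℝ) ^ (-a) ≤ max 1 (1 - a)⁻¹ * (m : ℝ) ^ (1 - a) := by
  rcases le_or_gt a 0 with ha0 | ha0
  · calc ∑ i ∈ Icc 1 m, (i : ℝ) ^ (-a) ≤ ∑ _i ∈ Icc 1 m, (m : ℝ) ^ (-a) := by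
          gcongr with i hi
          · linarith
          · exact_mod_cast (mem_Icc.1 hi).2
      _ = (m : ℝ) ^ (1 - a) := by
          rcases m.eq_zero_or_pos with rfl | hm
          · simp [zero_rpow (show 1 - a ≠ 0 by linarith)]
          rw [sum_const, Nat.card_Icc, add_tsub_cancel_right, nsmul_eq_mul, sub_eq_neg_add,
            rpow_add_one (by positivity), mul_comm]
      _ ≤ max 1 (1 - a)⁻¹ * (m : ℝ) ^ (1 - a) :=
          le_mul_of_one_le_left (by positivity) (le_max_left _ _)
  · calc ∑ i ∈ Icc 1 m, (i : ℝ) ^ (-a) = ∑ k ∈ range m, ((k : ℝ) + 1) ^ (-a) := by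
          rw [← Ico_add_one_right_eq_Icc, sum_Ico_eq_sum_range]
          simp [add_comm]
      _ ≤ ∑ k ∈ range m, (1 - a)⁻¹ * (((k : ℝ) + 1) ^ (1 - a) - (k : ℝ) ^ (1 - a)) := by
          gcongr with k
          rw [inv_mul_eq_div, le_div_iff₀' (by linarith)]
          exact one_sub_mul_rpow_neg_le_rpow_sub_rpow ha0.le ha k.cast_nonneg
      _ = (1 - a)⁻¹ * (m : ℝ) ^ (1 - a) := by
          have htel := sum_range_sub (fun k : ℕ => (k : ℝ) ^ (1 - a)) m
          push_cast at htel
          rw [← mul_sum, htel, zero_rpow (by linarith), sub_zero]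
      _ ≤ max 1 (1 - a)⁻¹ * (m : ℝ) ^ (1 - a) := by gcongr; exact le_max_right _ _

theorem log_div_sub_one_le_sum_inv_filter_not {P : ℕ → Prop} [DecidablePred P] {n : ℕ}
    {y : ℝ} (hn : 0 < n) (hy : 1 ≤ y) (hP : {i ∈ Icc 1 n | P i} ⊆ Icc 1 ⌊y⌋₊) :
    log (n / y) - 1 ≤ ∑ i ∈ Icc 1 n with ¬ P i, (i : ℝ)⁻¹ := by
  have hn_le : log n ≤ ∑ i ∈ Icc 1 n, (i : ℝ)⁻¹ := by
    have h := log_add_one_le_harmonic n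
    simp only [harmonic_eq_sum_Icc, Rat.cast_sum, Rat.cast_inv, Rat.cast_natCast] at h
    exact (log_le_log (by positivity) (by push_cast; linarith)).trans h
  have hy_le : ∑ i ∈ Icc 1 ⌊y⌋₊, (i : ℝ)⁻¹ ≤ 1 + log y := by
    have h := harmonic_floor_le_one_add_log y hy
    simpa only [harmonic_eq_sum_Icc, Rat.cast_sum, Rat.cast_inv, Rat.cast_natCast] using h
  have hP_le : ∑ i ∈ Icc 1 n with P i, (i : ℝ)⁻¹ ≤ ∑ i ∈ Icc 1 ⌊y⌋₊, (i : ℝ)⁻¹ :=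
    sum_le_sum_of_subset_of_nonneg hP fun i _ _ => by positivity
  rw [← sum_filter_add_sum_filter_not _ P] at hn_le
  rw [log_div (by positivity) (by positivity)]
  linarith

section Weight

variable {lam β p : ℝ} {n : ℕ}

theorem phiW_eq_mul_rpow (hx : 0 ≤ β * n * p) :
    phiW lam β p n = p ^ (2 * lam) * (1 + (β * n * p)⁻¹)⁻¹ ^ (1 - 2 * lam) := by
  rw [phiW, inv_rpow (by positivity), ← rpow_neg (by positivity), neg_sub, sub_eq_neg_add]

theorem phiW_pos (hβ : 0 < β) (hp : 0 < p) (hn : 0 < n) : 0 < phiW lam β p n := by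
  unfold phiW; positivity

theorem phiW_le_rpow (hlam : lam ≤ 1 / 2) (hβ : 0 < β) (hp : 0 < p) (hn : 0 < n) :
    phiW lam β p n ≤ p ^ (2 * lam) := by
  rw [phiW_eq_mul_rpow (by positivity)]
  refine mul_le_of_le_one_right (by positivity) (rpow_le_one (by positivity) ?_ (by linarith))
  exact inv_le_one_of_one_le₀ (le_add_of_nonneg_right (by positivity))

theorem rpow_mul_le_phiW {δ : ℝ} (hlam : lam ≤ 1 / 2) (hβ : 0 < β) (hp : 0 < p) (hn : 0 < n)
    (hnp : n * p ≤ δ) :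
    (β / (1 + β * δ)) ^ (1 - 2 * lam) * (n : ℝ) ^ (1 - 2 * lam) * p ≤ phiW lam β p n := by
  have hx : 0 < β * n * p := by positivity
  have hδ : 0 < δ := lt_of_lt_of_le (by positivity) hnp
  have hw : β / (1 + β * δ) * n * p ≤ (1 + (β * n * p)⁻¹)⁻¹ := by
    rw [show (1 + (β * n * p)⁻¹)⁻¹ = β * n * p / (1 + β * n * p) by field_simp; ring,
      div_mul_eq_mul_div, div_mul_eq_mul_div]
    refine div_le_div_of_nonneg_left hx.le (by positivity) ?_
    nlinarith
  calc (β / (1 + β * δ)) ^ (1 - 2 * lam) * (n : ℝ) ^ (1 - 2 * lam) * p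
      = (β / (1 + β * δ)) ^ (1 - 2 * lam) * (n : ℝ) ^ (1 - 2 * lam) *
          (p ^ (1 - 2 * lam) * p ^ (2 * lam)) := by
        rw [← rpow_add hp, sub_add_cancel, rpow_one]
    _ = p ^ (2 * lam) * (β / (1 + β * δ) * n * p) ^ (1 - 2 * lam) := by
        rw [mul_rpow (by positivity) hp.le, mul_rpow (by positivity) (by positivity)]
        ring
    _ ≤ p ^ (2 * lam) * (1 + (β * n * p)⁻¹)⁻¹ ^ (1 - 2 * lam) := by
        gcongr
        linarith
    _ = phiW lam β p n := (phiW_eq_mul_rpow hx.le).symm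

end Weight

namespace IsZipfArray

variable {p : ℕ → ℕ → ℝ} {κ₁ κ₂ lam β δ : ℝ} {n : ℕ}

theorem bounds (hz : IsZipfArray p κ₁ κ₂) (hn : 2 ≤ n) {i : ℕ} (hi : i ∈ Icc 1 n) :
    0 < p i n ∧ κ₁ / (i * log n) ≤ p i n ∧ p i n ≤ κ₂ / (i * log n) := by
  obtain ⟨hi1, hin⟩ := mem_Icc.1 hi
  obtain ⟨hpos, -, hlow, hup⟩ := hz.2.2 n hn i hi1 hin
  exact ⟨hpos, hlow, hup⟩

theorem filter_lt_subset_Icc (hz : IsZipfArray p κ₁ κ₂) (hn : 2 ≤ n) (hδ : 0 < δ) {K : ℝ}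
    (hK : κ₂ / δ ≤ K) : {i ∈ Icc 1 n | δ < n * p i n} ⊆ Icc 1 ⌊K * n / log n⌋₊ := by
  intro i hi
  obtain ⟨hi, hlt⟩ := mem_filter.1 hi
  have hL : 0 < log n := log_pos (by exact_mod_cast hn)
  have hi1 : 1 ≤ i := (mem_Icc.1 hi).1
  have hiL : 0 < (i : ℝ) * log n := by positivity
  have hδiL : δ * (i * log n) < κ₂ * n := by
    have := lt_of_lt_of_le hlt (mul_le_mul_of_nonneg_left (hz.bounds hn hi).2.2 n.cast_nonneg)
    rwa [mul_div_assoc', lt_div_iff₀ hiL, mul_comm (n : ℝ)] at this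
  refine mem_Icc.2 ⟨hi1, Nat.le_floor ?_⟩
  calc (i : ℝ) ≤ κ₂ / δ * n / log n := by
        rw [le_div_iff₀ hL, div_mul_eq_mul_div, le_div_iff₀ hδ]; linarith
    _ ≤ K * n / log n := by gcongr

theorem sum_filter_lt_phiW_le (hz : IsZipfArray p κ₁ κ₂) (hn : 2 ≤ n) (hlam : lam < 1 / 2)
    (hβ : 0 < β) (hδ : 0 < δ) {K : ℝ} (hK : κ₂ / δ ≤ K) :
    ∑ i ∈ Icc 1 n with δ < n * p i n, phiW lam β (p i n) n ≤
      max (κ₁ ^ (2 * lam)) (κ₂ ^ (2 * lam)) * max 1 (1 - 2 * lam)⁻¹ * K ^ (1 - 2 * lam) *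
        ((n : ℝ) ^ (1 - 2 * lam) / log n) := by
  set L := log n
  set C := max (κ₁ ^ (2 * lam)) (κ₂ ^ (2 * lam))
  have hL : 0 < L := log_pos (by exact_mod_cast hn)
  have hC : 0 ≤ C := le_max_of_le_left (rpow_nonneg hz.1.le _)
  have hK0 : 0 ≤ K := (div_nonneg (hz.1.le.trans hz.2.1) hδ.le).trans hK
  have hpt : ∀ i ∈ Icc 1 n,
      phiW lam β (p i n) n ≤ C * (i : ℝ) ^ (-(2 * lam)) * L ^ (-(2 * lam)) := by
    intro i hi
    obtain ⟨hpos, hlow, hup⟩ := hz.bounds hn hi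
    have hiL : 0 < (i : ℝ) * L := by have := (mem_Icc.1 hi).1; positivity
    have hscaled : (p i n * (i * L)) ^ (2 * lam) ≤ C := by
      refine rpow_le_max_rpow_of_mem_Icc hz.1 ?_ ?_ _
      · rwa [← div_le_iff₀ hiL]
      · rwa [← le_div_iff₀ hiL]
    calc phiW lam β (p i n) n ≤ p i n ^ (2 * lam) := phiW_le_rpow hlam.le hβ hpos (by omega)
      _ = (p i n * (i * L)) ^ (2 * lam) * ((i : ℝ) ^ (-(2 * lam)) * L ^ (-(2 * lam))) := by
        rw [← mul_rpow (by positivity) hL.le, rpow_neg hiL.le, mul_rpow hpos.le hiL.le,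
          mul_assoc, mul_inv_cancel₀ (by positivity), mul_one]
      _ ≤ C * (i : ℝ) ^ (-(2 * lam)) * L ^ (-(2 * lam)) := by
        rw [← mul_assoc]; gcongr
  have hy : 0 ≤ K * n / L := by positivity
  calc ∑ i ∈ Icc 1 n with δ < n * p i n, phiW lam β (p i n) n
      ≤ ∑ i ∈ Icc 1 n with δ < n * p i n, C * (i : ℝ) ^ (-(2 * lam)) * L ^ (-(2 * lam)) :=
        sum_le_sum fun i hi => hpt i (mem_filter.1 hi).1
    _ ≤ ∑ i ∈ Icc 1 ⌊K * n / L⌋₊, C * (i : ℝ) ^ (-(2 * lam)) * L ^ (-(2 * lam)) :=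
        sum_le_sum_of_subset_of_nonneg (hz.filter_lt_subset_Icc hn hδ hK)
          fun i _ _ => by positivity
    _ = C * L ^ (-(2 * lam)) * ∑ i ∈ Icc 1 ⌊K * n / L⌋₊, (i : ℝ) ^ (-(2 * lam)) := by
        rw [mul_sum]; exact sum_congr rfl fun i _ => by ring
    _ ≤ C * L ^ (-(2 * lam)) * (max 1 (1 - 2 * lam)⁻¹ * (K * n / L) ^ (1 - 2 * lam)) := by
        refine mul_le_mul_of_nonneg_left
          ((sum_Icc_rpow_neg_le (a := 2 * lam) (by linarith) _).trans ?_) (by positivity)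
        gcongr
        · linarith
        · exact Nat.floor_le hy
    _ = C * max 1 (1 - 2 * lam)⁻¹ * K ^ (1 - 2 * lam) * ((n : ℝ) ^ (1 - 2 * lam) / L) := by
        rw [div_rpow (by positivity) hL.le, mul_rpow hK0 n.cast_nonneg, rpow_neg hL.le,
          rpow_sub hL, rpow_one]
        field_simp

theorem mul_sum_inv_le_sum_phiW (hz : IsZipfArray p κ₁ κ₂) (hn : 2 ≤ n) (hlam : lam ≤ 1 / 2)
    (hβ : 0 < β) (hδ : 0 < δ) :
    (β / (1 + β * δ)) ^ (1 - 2 * lam) * κ₁ * ((n : ℝ) ^ (1 - 2 * lam) / log n) *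
        ∑ i ∈ Icc 1 n with ¬ δ < n * p i n, (i : ℝ)⁻¹ ≤
      ∑ i ∈ Icc 1 n with ¬ δ < n * p i n, phiW lam β (p i n) n := by
  rw [mul_sum]
  refine sum_le_sum fun i hi => ?_
  obtain ⟨hi, hle⟩ := mem_filter.1 hi
  obtain ⟨hpos, hlow, -⟩ := hz.bounds hn hi
  calc (β / (1 + β * δ)) ^ (1 - 2 * lam) * κ₁ * ((n : ℝ) ^ (1 - 2 * lam) / log n) * (i : ℝ)⁻¹
      = (β / (1 + β * δ)) ^ (1 - 2 * lam) * (n : ℝ) ^ (1 - 2 * lam) * (κ₁ / (i * log n)) := by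
        ring
    _ ≤ (β / (1 + β * δ)) ^ (1 - 2 * lam) * (n : ℝ) ^ (1 - 2 * lam) * p i n := by
        gcongr
    _ ≤ phiW lam β (p i n) n := rpow_mul_le_phiW hlam hβ hpos (by omega) (not_lt.1 hle)

theorem eventually_sum_filter_lt_phiW_le (hz : IsZipfArray p κ₁ κ₂) (hlam : lam < 1 / 2)
    (hβ : 0 < β) (hδ : 0 < δ) {η : ℝ} (hη : 0 < η) :
    ∀ᶠ n : ℕ in atTop, ∑ i ∈ Icc 1 n with δ < n * p i n, phiW lam β (p i n) n ≤
      η * ∑ i ∈ Icc 1 n, phiW lam β (p i n) n := by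
  set K := max (κ₂ / δ) 1
  set c := (β / (1 + β * δ)) ^ (1 - 2 * lam) * κ₁
  set C := max (κ₁ ^ (2 * lam)) (κ₂ ^ (2 * lam)) * max 1 (1 - 2 * lam)⁻¹ * K ^ (1 - 2 * lam)
  have hK : 0 < K := lt_max_of_lt_right one_pos
  have hc : 0 < c := mul_pos (rpow_pos_of_pos (by positivity) _) hz.1
  have hloglog : Tendsto (fun n : ℕ => log (log n / K)) atTop atTop :=
    tendsto_log_atTop.comp
      ((tendsto_log_atTop.comp tendsto_natCast_atTop_atTop).atTop_div_const hK)
  filter_upwards [hloglog.eventually_ge_atTop (C / (η * c) + 1), eventually_ge_atTop 2]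
    with n hlarge hn
  have hL : 0 < log n := log_pos (by exact_mod_cast hn)
  have hy : 1 ≤ K * n / log n := by
    rw [le_div_iff₀ hL, one_mul]
    exact (log_le_self n.cast_nonneg).trans (le_mul_of_one_le_left n.cast_nonneg (le_max_right _ _))
  have hharmonic := log_div_sub_one_le_sum_inv_filter_not (zero_lt_two.trans_le hn) hy
    (hz.filter_lt_subset_Icc hn hδ (le_max_left _ _))
  rw [show (n : ℝ) / (K * n / log n) = log n / K by field_simp] at hharmonic
  calc ∑ i ∈ Icc 1 n with δ < n * p i n, phiW lam β (p i n) n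
      ≤ C * ((n : ℝ) ^ (1 - 2 * lam) / log n) :=
        hz.sum_filter_lt_phiW_le hn hlam hβ hδ (le_max_left _ _)
    _ = η * (c * ((n : ℝ) ^ (1 - 2 * lam) / log n) * (C / (η * c))) := by
        field_simp
    _ ≤ η * (c * ((n : ℝ) ^ (1 - 2 * lam) / log n) *
          ∑ i ∈ Icc 1 n with ¬ δ < n * p i n, (i : ℝ)⁻¹) := by
        gcongr
        linarith
    _ ≤ η * ∑ i ∈ Icc 1 n with ¬ δ < n * p i n, phiW lam β (p i n) n := by
        gcongr
        exact hz.mul_sum_inv_le_sum_phiW hn hlam.le hβ hδ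
    _ ≤ η * ∑ i ∈ Icc 1 n, phiW lam β (p i n) n := by
        gcongr
        · exact fun i hi _ => (phiW_pos hβ (hz.bounds hn hi).1 (by omega)).le
        · exact filter_subset _ _

end IsZipfArray

theorem stmt_10 {lam β κ₁ κ₂ : ℝ} (hlam : lam < 1/2) (hβ : 0 < β)
    (p : ℕ → ℕ → ℝ) (hz : IsZipfArray p κ₁ κ₂)
    (u : ℕ → ℕ → ℝ)
    (hbdd : ∃ M : ℝ, ∀ n : ℕ, 2 ≤ n → ∀ i : ℕ, 1 ≤ i → i ≤ n →
      |u i n| ≤ M * phiW lam β (p i n) n)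
    (ℓ : ℝ)
    (hlim : ∀ ε : ℝ, 0 < ε → ∃ δ : ℝ, 0 < δ ∧ ∀ n : ℕ, 2 ≤ n → ∀ i : ℕ, 1 ≤ i → i ≤ n →
      (n : ℝ) * p i n ≤ δ → |u i n / phiW lam β (p i n) n - ℓ| ≤ ε) :
    Tendsto (fun n : ℕ =>
        (∑ i ∈ Finset.Icc 1 n, u i n) / (∑ i ∈ Finset.Icc 1 n, phiW lam β (p i n) n))
      atTop (𝓝 ℓ) := by
  obtain ⟨M, hM⟩ := hbdd
  refine Metric.tendsto_nhds.2 fun ε hε => ?_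
  obtain ⟨δ, hδ, hgood⟩ := hlim (ε / 2) (by positivity)
  set η := ε / (2 * (|M| + |ℓ| + 1)) with hη_def
  filter_upwards [hz.eventually_sum_filter_lt_phiW_le hlam hβ hδ (η := η) (by positivity),
    eventually_ge_atTop 2] with n hbad hn
  have hclose := abs_sum_div_sum_sub_le (s := Icc 1 n) (fun i => δ < n * p i n)
    ⟨1, mem_Icc.2 ⟨le_rfl, by omega⟩⟩ (fun i hi => phiW_pos hβ (hz.bounds hn hi).1 (by omega))
    (fun i hi => hM n hn i (mem_Icc.1 hi).1 (mem_Icc.1 hi).2) (by positivity)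
    (fun i hi hi' => hgood n hn i (mem_Icc.1 hi).1 (mem_Icc.1 hi).2 (not_lt.1 hi')) hbad
  have hη : (M + |ℓ|) * η < ε / 2 := by
    calc (M + |ℓ|) * η < (|M| + |ℓ| + 1) * η :=
          mul_lt_mul_of_pos_right (by linarith [le_abs_self M]) (by positivity)
      _ = ε / 2 := by rw [hη_def]; field_simp
  rw [Real.dist_eq]
  linarith
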